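/- Let A be an n×n complex matrix, p a positive integer, E = [I, 0, ..., 0] ∈ ℂ^{n×np}, J = J_p(0) ⊗ I where J_p(0) is the p×p nilpotent Jordan block, and W the block upper triangular matrix [[A, E],[0, J]] of size n(p+1). Then the first block row of exp(W) equals [exp(A), φ_1(A), φ_2(A), ..., φ_p(A)]. -/

import Mathlib

/-- `φ_j(A) = ∑_{k=0}^∞ A^k/(k+j)!` for `j ≥ 1` (and `exp A` for `j = 0`). -/
noncomputable def phiMat {n : ℕ} (j : ℕ) (A : Matrix (Fin n) (Fin n) ℂ) :
    Matrix (Fin n) (Fin n) ℂ :=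
  if j = 0 then NormedSpace.exp A
  else ∑' k : ℕ, (((k + j).factorial : ℂ))⁻¹ • A ^ k

/-- The block upper triangular matrix `W = [[A, E],[0, J]]` of size `n(p+1)`,
where `E = [I, 0, …, 0] ∈ ℂ^{n×np}` and `J = J_p(0) ⊗ I_n` with `J_p(0)` the
`p×p` nilpotent Jordan block.  Block row/column indices range over `Fin (p+1)`:
block `(0,0)` is `A`, and all blocks on the block superdiagonal (which make up
`E` and `J`) are the identity; everything else vanishes. -/
noncomputable def blockW {n : ℕ} (p : ℕ) (A : Matrix (Fin n) (Fin n) ℂ) :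
    Matrix (Fin (p + 1) × Fin n) (Fin (p + 1) × Fin n) ℂ :=
  fun x y =>
    if x.1 = 0 ∧ y.1 = 0 then A x.2 y.2
    else if (y.1 : ℕ) = (x.1 : ℕ) + 1 then (if x.2 = y.2 then 1 else 0) else 0

/-!
Right multiplication by `W` shifts every block column one step to the right and replaces
block column `0` by block column `0` times `A`. Hence the first block row of `W ^ k` is
`[A ^ k, A ^ (k - 1), …, A ^ (k - p)]`, with `A ^ (k - j)` read as `0` when `j > k`, and block `j`
of `exp W = ∑ W ^ k / k!` is `∑_{k ≥ j} A ^ (k - j) / k! = ∑_k A ^ k / (k + j)! = φ_j(A)`.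
-/

open NormedSpace Matrix Nat

theorem HasSum.matrix_apply {X ι κ R : Type*} [AddCommMonoid R] [TopologicalSpace R]
    {f : X → Matrix ι κ R} {M : Matrix ι κ R} (h : HasSum f M) (x : ι) (y : κ) :
    HasSum (fun k => f k x y) (M x y) :=
  Pi.hasSum.1 (Pi.hasSum.1 h x) y

theorem summable_inv_factorial_add_smul_pow {𝕂 𝔸 : Type*} [RCLike 𝕂] [NormedRing 𝔸]
    [NormedAlgebra 𝕂 𝔸] [CompleteSpace 𝔸] (j : ℕ) (x : 𝔸) :
    Summable fun k => ((k + j)! : 𝕂)⁻¹ • x ^ k := by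
  refine .of_norm_bounded (norm_expSeries_summable' (𝕂 := 𝕂) x) fun k => ?_
  rw [norm_smul, norm_smul]
  gcongr
  rw [norm_inv, norm_inv, RCLike.norm_natCast, RCLike.norm_natCast]
  gcongr
  exact Nat.le_add_right k j

section MatrixNorm

-- `exp` does not depend on a norm; the ℓ∞ operator norm only gives access to the convergence
-- lemmas for normed algebras.
attribute [local instance] Matrix.linftyOpNormedRing Matrix.linftyOpNormedAlgebra

theorem Matrix.hasSum_exp {𝕂 ι : Type*} [RCLike 𝕂] [Fintype ι] [DecidableEq ι]
    (M : Matrix ι ι 𝕂) : HasSum (fun k => (k ! : 𝕂)⁻¹ • M ^ k) (exp M) :=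
  exp_series_hasSum_exp' M

theorem hasSum_phiMat {n : ℕ} (j : ℕ) (A : Matrix (Fin n) (Fin n) ℂ) :
    HasSum (fun k => ((k + j)! : ℂ)⁻¹ • A ^ k) (phiMat j A) := by
  rcases eq_or_ne j 0 with rfl | hj
  · simpa [phiMat] using Matrix.hasSum_exp A
  · rw [phiMat, if_neg hj]
    exact (summable_inv_factorial_add_smul_pow j A).hasSum

end MatrixNorm

section BlockW

variable {n p : ℕ} {ι : Type*} (A : Matrix (Fin n) (Fin n) ℂ)
  (M : Matrix ι (Fin (p + 1) × Fin n) ℂ) (x : ι) (b : Fin n)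

theorem mul_blockW_apply_zero :
    (M * blockW p A) x (0, b) = ∑ c, M x (0, c) * A c b := by
  rw [mul_apply, Fintype.sum_prod_type, Finset.sum_eq_single 0]
  · simp [blockW]
  · intro i _ hi
    simp [blockW, hi]
  · simp

theorem mul_blockW_apply_succ (i : Fin p) :
    (M * blockW p A) x (i.succ, b) = M x (i.castSucc, b) := by
  rw [mul_apply, Fintype.sum_prod_type, Finset.sum_eq_single i.castSucc]
  · simp [blockW]
  · intro k _ hk
    have : (i : ℕ) ≠ k := fun h => hk (Fin.ext h.symm)
    simp [blockW, this]
  · simp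

theorem blockW_pow_apply_zero (k : ℕ) (j : Fin (p + 1)) (a : Fin n) :
    (blockW p A ^ k) (0, a) (j, b) = if (j : ℕ) ≤ k then (A ^ (k - j)) a b else 0 := by
  induction k generalizing j b with
  | zero =>
    cases j using Fin.cases <;> simp [one_apply, Prod.ext_iff, (Fin.succ_ne_zero _).symm]
  | succ k ih =>
    cases j using Fin.cases with
    | zero => simp [pow_succ, mul_blockW_apply_zero, ih, ← mul_apply]
    | succ i => simp [pow_succ, mul_blockW_apply_succ, ih]

end BlockW

theorem exp_blockW_first_block_row_general {n : ℕ} (p : ℕ)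
    (A : Matrix (Fin n) (Fin n) ℂ) (j : Fin (p + 1)) (a b : Fin n) :
    NormedSpace.exp (blockW p A) (0, a) (j, b) = phiMat (j : ℕ) A a b := by
  have hexp := (Matrix.hasSum_exp (blockW p A)).matrix_apply (0, a) (j, b)
  simp only [Matrix.smul_apply, blockW_pow_apply_zero, smul_eq_mul, mul_ite, mul_zero] at hexp
  rw [← hasSum_nat_add_iff' j, Finset.sum_eq_zero fun k hk => if_neg (by simpa using hk),
    sub_zero] at hexp
  refine hexp.unique ?_
  simpa using (hasSum_phiMat j A).matrix_apply a b

/-- The first block row of `exp(W)` equals `[exp(A), φ_1(A), φ_2(A), …, φ_p(A)]`. -/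
theorem exp_blockW_first_block_row {n : ℕ} (p : ℕ) (hp : 0 < p)
    (A : Matrix (Fin n) (Fin n) ℂ) (j : Fin (p + 1)) (a b : Fin n) :
    NormedSpace.exp (blockW p A) (0, a) (j, b) = phiMat (j : ℕ) A a b :=
  exp_blockW_first_block_row_general p A j a b
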